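/- arXiv:2409.09643 — 2 statements merged into one kernel-verified Lean document; each statement's English description precedes it below -/
import Mathlib

section
/- For real s > 1, the product ∏_{j≥0} ζ(s+j) of shifted Riemann zeta values converges, and ∏_{j≥0} ζ(s+j) = ∑_{n≥1} ϑ(n)/n^s, where ϑ(n) = ∏_{p^a ∥ n} ∏_{j=1}^{a} (1-p^{-j})^{-1}. -/
open Finset

/-- `ϑ(n) = ∏_{p^a ∥ n} ∏_{j=1}^a (1-p^{-j})⁻¹`. -/
noncomputable def theta (n : ℕ) : ℝ :=
  n.factorization.prod fun p a => ∏ j ∈ Icc 1 a, (1 - ((p : ℝ))⁻¹ ^ j)⁻¹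

/-! Write `F(s) = ∑ ϑ(n) n^{-s}`. On prime powers `∑_{i ≤ k} p^{-i} ϑ(p^i) = ϑ(p^k)` (a
telescoping `q`-series identity), so by multiplicativity `ϑ(n) = ∑_{d ∣ n} ϑ(d)/d`, that is
`F(s) = ζ(s) F(s+1)`. Since `ϑ(n) ≤ n`, `F` converges for `s > 2`, and the functional equation
extends convergence to `s > 1`. Iterating it gives `(∏_{j<J} ζ(s+j)) F(s+J) = F(s)`. Finally
`F(s+J) → ϑ(1) = 1` and `ζ(s+J) → 1`, both at rate `2^{-J}`, which also makes the infinite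
product converge. -/

open LSeries ArithmeticFunction Filter
open scoped LSeries.notation Topology

theorem sum_range_pow_mul_prod_inv_one_sub_pow {K : Type*} [Field K] {x : K}
    (hx : ∀ j ≠ 0, x ^ j ≠ 1) (k : ℕ) :
    ∑ i ∈ range (k + 1), x ^ i * ∏ j ∈ Icc 1 i, (1 - x ^ j)⁻¹ =
      ∏ j ∈ Icc 1 k, (1 - x ^ j)⁻¹ := by
  induction k with
  | zero => simp
  | succ k ih =>
    have hk : 1 - x ^ (k + 1) ≠ 0 := sub_ne_zero.mpr (hx _ k.succ_ne_zero).symm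
    rw [sum_range_succ, ih, prod_Icc_succ_top (by omega)]
    field_simp
    ring

theorem theta_one : theta 1 = 1 := by
  simp [theta]

theorem theta_prime_pow {p : ℕ} (hp : p.Prime) (k : ℕ) :
    theta (p ^ k) = ∏ j ∈ Icc 1 k, (1 - (p : ℝ)⁻¹ ^ j)⁻¹ := by
  rw [theta, hp.factorization_pow, Finsupp.prod_single_index (by simp)]

theorem theta_mul {m n : ℕ} (hm : m ≠ 0) (hn : n ≠ 0) (h : m.Coprime n) :
    theta (m * n) = theta m * theta n := by
  rw [theta, Nat.factorization_mul hm hn, Finsupp.prod_add_index_of_disjoint]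
  · rfl
  · rw [Nat.support_factorization, Nat.support_factorization]
    exact h.disjoint_primeFactors

theorem inv_one_sub_inv_pow_nonneg (p j : ℕ) : 0 ≤ (1 - (p : ℝ)⁻¹ ^ j)⁻¹ :=
  inv_nonneg.mpr <| sub_nonneg.mpr <| pow_le_one₀ (by positivity) (Nat.cast_inv_le_one p)

theorem theta_nonneg (n : ℕ) : 0 ≤ theta n := by
  unfold theta Finsupp.prod
  exact prod_nonneg fun p _ ↦ prod_nonneg fun j _ ↦ inv_one_sub_inv_pow_nonneg p j

theorem prod_inv_one_sub_inv_pow_le_pow {p : ℕ} (hp : 2 ≤ p) (a : ℕ) :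
    ∏ j ∈ Icc 1 a, (1 - (p : ℝ)⁻¹ ^ j)⁻¹ ≤ (p : ℝ) ^ a := by
  have hp_inv : (p : ℝ)⁻¹ ≤ 2⁻¹ := inv_anti₀ (by norm_num) (by exact_mod_cast hp)
  have hpow (j : ℕ) (hj : j ∈ Icc 1 a) : (p : ℝ)⁻¹ ^ j ≤ 2⁻¹ :=
    (pow_le_of_le_one (by positivity) (hp_inv.trans (by norm_num)) (by grind)).trans hp_inv
  calc ∏ j ∈ Icc 1 a, (1 - (p : ℝ)⁻¹ ^ j)⁻¹ ≤ ∏ _j ∈ Icc 1 a, (p : ℝ) := by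
        refine prod_le_prod (fun j hj ↦ ?_) fun j hj ↦ ?_
        · exact inv_one_sub_inv_pow_nonneg p j
        · rw [inv_le_comm₀ (by linarith [hpow j hj]) (by positivity)]
          linarith [hpow j hj]
    _ = (p : ℝ) ^ a := by simp

theorem theta_le_self {n : ℕ} (hn : n ≠ 0) : theta n ≤ n := by
  calc theta n ≤ n.factorization.prod fun p a ↦ (p : ℝ) ^ a := by
        unfold theta Finsupp.prod
        refine prod_le_prod (fun p _ ↦ prod_nonneg fun j _ ↦ inv_one_sub_inv_pow_nonneg p j)
          fun p hp ↦ prod_inv_one_sub_inv_pow_le_pow ?_ _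
        exact (Nat.prime_of_mem_primeFactors (Nat.support_factorization n ▸ hp)).two_le
    _ = n := by exact_mod_cast Nat.prod_factorization_pow_eq_self hn

theorem toArithmeticFunction_apply {R : Type*} [Zero R] (f : ℕ → R) {n : ℕ} (hn : n ≠ 0) :
    toArithmeticFunction f n = f n :=
  if_neg hn

theorem isMultiplicative_toArithmeticFunction_theta :
    (toArithmeticFunction theta).IsMultiplicative := by
  refine IsMultiplicative.iff_ne_zero.mpr ⟨by simp [toArithmeticFunction, theta], ?_⟩
  intro m n hm hn h
  rw [toArithmeticFunction_apply _ hm, toArithmeticFunction_apply _ hn,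
    toArithmeticFunction_apply _ (mul_ne_zero hm hn), theta_mul hm hn h]

theorem sum_divisors_theta_div {n : ℕ} (hn : n ≠ 0) :
    ∑ d ∈ n.divisors, theta d / d = theta n := by
  set Θ := toArithmeticFunction theta
  have hΘ : Θ.IsMultiplicative := isMultiplicative_toArithmeticFunction_theta
  have hzeta_mul : (zeta : ArithmeticFunction ℝ) * Θ.pdiv (ArithmeticFunction.id : _) = Θ := by
    refine (IsMultiplicative.eq_iff_eq_on_prime_powers _
      (isMultiplicative_zeta.natCast.mul (hΘ.pdiv isMultiplicative_id.natCast)) _ hΘ).mpr ?_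
    intro p k hp
    have hx : ∀ j ≠ 0, (p : ℝ)⁻¹ ^ j ≠ 1 := fun j hj ↦
      (pow_lt_one₀ (by positivity) (inv_lt_one_of_one_lt₀ (by exact_mod_cast hp.one_lt)) hj).ne
    rw [coe_zeta_mul_apply, Nat.sum_divisors_prime_pow hp,
      toArithmeticFunction_apply _ (pow_ne_zero k hp.ne_zero), theta_prime_pow hp,
      ← sum_range_pow_mul_prod_inv_one_sub_pow hx k]
    refine sum_congr rfl fun i _ ↦ ?_
    rw [pdiv_apply, toArithmeticFunction_apply _ (pow_ne_zero i hp.ne_zero), theta_prime_pow hp,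
      natCoe_apply, id_apply, Nat.cast_pow, div_eq_inv_mul, inv_pow]
  have h := congr($hzeta_mul n)
  rw [coe_zeta_mul_apply, toArithmeticFunction_apply _ hn] at h
  rw [← h]
  refine sum_congr rfl fun d hd ↦ ?_
  rw [pdiv_apply, toArithmeticFunction_apply _ (Nat.pos_of_mem_divisors hd).ne', natCoe_apply,
    id_apply]

theorem LSeries.term_div_natCast (f : ℕ → ℂ) (s : ℂ) :
    term (fun n ↦ f n / n) s = term f (s + 1) := by
  ext n
  rcases eq_or_ne n 0 with rfl | hn
  · simp
  rw [term_of_ne_zero hn, term_of_ne_zero hn, Complex.cpow_add _ _ (Nat.cast_ne_zero.mpr hn),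
    Complex.cpow_one, div_div, mul_comm]

theorem LSeriesSummable_div_natCast_iff {f : ℕ → ℂ} {s : ℂ} :
    LSeriesSummable (fun n ↦ f n / n) s ↔ LSeriesSummable f (s + 1) := by
  rw [LSeriesSummable, LSeriesSummable, term_div_natCast]

theorem LSeries_div_natCast (f : ℕ → ℂ) (s : ℂ) :
    LSeries (fun n ↦ f n / n) s = LSeries f (s + 1) := by
  rw [LSeries, LSeries, term_div_natCast]

theorem norm_LSeries_add_natCast_sub_le {f : ℕ → ℂ} {s : ℂ} (hf : LSeriesSummable f s) (J : ℕ) :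
    ‖LSeries f (s + J) - f 1‖ ≤ (1 / 2) ^ J * ∑' n, ‖term f s n‖ := by
  have hfJ : LSeriesSummable f (s + J) := hf.of_re_le_re (by simp)
  have hterm (n : ℕ) :
      ‖if n = 1 then 0 else term f (s + J) n‖ ≤ (1 / 2) ^ J * ‖term f s n‖ := by
    split_ifs with h1
    · rw [norm_zero]; positivity
    rcases eq_or_ne n 0 with rfl | hn
    · simp
    have hn2 : (2 : ℝ) ≤ n := by norm_cast; omega
    rw [norm_term_eq, norm_term_eq, if_neg hn, if_neg hn, Complex.add_re, Complex.natCast_re,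
      Real.rpow_add (by positivity), Real.rpow_natCast, ← div_div, div_eq_mul_inv _ ((n : ℝ) ^ J),
      mul_comm, ← inv_pow]
    gcongr
    rw [one_div]
    exact inv_anti₀ two_pos hn2
  have hrest : Summable fun n ↦ if n = 1 then 0 else term f (s + J) n :=
    Summable.of_norm_bounded hfJ.norm fun n ↦ by split_ifs <;> simp
  rw [LSeries, hfJ.tsum_eq_add_tsum_ite 1, term_of_ne_zero one_ne_zero, Nat.cast_one,
    Complex.one_cpow, div_one, add_sub_cancel_left, ← tsum_mul_left]
  exact (norm_tsum_le_tsum_norm hrest.norm).trans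
    (hrest.norm.tsum_le_tsum hterm (hf.norm.mul_left _))

theorem LSeriesSummable.tendsto_LSeries_add_natCast {f : ℕ → ℂ} {s : ℂ}
    (hf : LSeriesSummable f s) : Tendsto (fun J : ℕ ↦ LSeries f (s + J)) atTop (𝓝 (f 1)) := by
  have hgeom : Tendsto (fun J : ℕ ↦ (1 / 2 : ℝ) ^ J * ∑' n, ‖term f s n‖) atTop (𝓝 0) := by
    simpa using (tendsto_pow_atTop_nhds_zero_of_lt_one (by norm_num) (by norm_num :
      (1 / 2 : ℝ) < 1)).mul_const (∑' n, ‖term f s n‖)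
  exact tendsto_sub_nhds_zero_iff.mp <|
    squeeze_zero_norm (norm_LSeries_add_natCast_sub_le hf) hgeom

theorem LSeriesHasSum.hasSum_pnat {f : ℕ → ℂ} {s a : ℂ} (h : LSeriesHasSum f s a) :
    HasSum (fun n : ℕ+ ↦ f n / (n : ℂ) ^ s) a := by
  have := (hasSum_pnat_iff (f := term f s)).mpr (by rwa [term_zero, add_zero])
  simpa [term_of_ne_zero] using this

theorem multipliable_riemannZeta_add_natCast {s : ℂ} (hs : 1 < s.re) :
    Multipliable fun j : ℕ ↦ riemannZeta (s + j) := by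
  have hbound (j : ℕ) : ‖riemannZeta (s + j) - 1‖ ≤ (1 / 2) ^ j * ∑' n, ‖term 1 s n‖ := by
    have := norm_LSeries_add_natCast_sub_le (LSeriesSummable_one_iff.mpr hs) j
    rwa [LSeries_one_eq_riemannZeta (by simp; linarith), Pi.one_apply] at this
  have hsum : Summable fun j : ℕ ↦ riemannZeta (s + j) - 1 :=
    .of_norm_bounded ((summable_geometric_of_lt_one (by norm_num) (by norm_num)).mul_right _)
      hbound
  simpa using Complex.multipliable_one_add_of_summable hsum

theorem LSeriesSummable_theta_of_two_lt {s : ℂ} (hs : 2 < s.re) : LSeriesSummable ↗theta s := by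
  refine LSeriesSummable_of_le_const_mul_rpow hs ⟨1, fun n hn ↦ ?_⟩
  rw [Complex.norm_real, Real.norm_of_nonneg (theta_nonneg n)]
  norm_num
  exact theta_le_self hn

theorem theta_eq_one_convolution {n : ℕ} (hn : n ≠ 0) :
    (theta n : ℂ) = ((1 : ℕ → ℂ) ⍟ fun d ↦ (theta d : ℂ) / d) n := by
  simp only [convolution_def, Pi.one_apply, one_mul]
  rw [Nat.sum_divisorsAntidiagonal' (fun _ d ↦ (theta d : ℂ) / d)]
  exact_mod_cast (sum_divisors_theta_div hn).symm

theorem LSeriesSummable_theta {s : ℂ} (hs : 1 < s.re) : LSeriesSummable ↗theta s := by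
  have hdiv : LSeriesSummable (fun d ↦ (theta d : ℂ) / d) s :=
    LSeriesSummable_div_natCast_iff.mpr (LSeriesSummable_theta_of_two_lt (by simp; linarith))
  rw [LSeriesSummable_congr s theta_eq_one_convolution]
  exact (LSeriesSummable_one_iff.mpr hs).convolution hdiv

theorem LSeries_theta_eq_riemannZeta_mul {s : ℂ} (hs : 1 < s.re) :
    LSeries ↗theta s = riemannZeta s * LSeries ↗theta (s + 1) := by
  have hdiv : LSeriesSummable (fun d ↦ (theta d : ℂ) / d) s :=
    LSeriesSummable_div_natCast_iff.mpr (LSeriesSummable_theta (by simp; linarith))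
  rw [LSeries_congr theta_eq_one_convolution,
    LSeries_convolution' (LSeriesSummable_one_iff.mpr hs) hdiv, LSeries_one_eq_riemannZeta hs,
    LSeries_div_natCast]

theorem prod_range_riemannZeta_mul_LSeries_theta {s : ℂ} (hs : 1 < s.re) (J : ℕ) :
    (∏ j ∈ range J, riemannZeta (s + j)) * LSeries ↗theta (s + J) = LSeries ↗theta s := by
  induction J with
  | zero => simp
  | succ J ih =>
    rw [prod_range_succ, mul_assoc, Nat.cast_succ, ← add_assoc,
      ← LSeries_theta_eq_riemannZeta_mul (by simp; linarith), ih]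

theorem stmt8 (s : ℝ) (hs : 1 < s) :
    Multipliable (fun j : ℕ => riemannZeta ((s : ℂ) + j)) ∧
    Summable (fun n : ℕ+ => (theta n : ℂ) / (n : ℂ) ^ (s : ℂ)) ∧
    ∏' j : ℕ, riemannZeta ((s : ℂ) + j) =
      ∑' n : ℕ+, (theta n : ℂ) / (n : ℂ) ^ (s : ℂ) := by
  have hs' : 1 < (s : ℂ).re := by simpa
  have hmult := multipliable_riemannZeta_add_natCast hs'
  have hprod : ∏' j : ℕ, riemannZeta ((s : ℂ) + j) = LSeries ↗theta s := by
    have hlim := hmult.hasProd.tendsto_prod_nat.mul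
      (LSeriesSummable_theta hs').tendsto_LSeries_add_natCast
    simp only [prod_range_riemannZeta_mul_LSeries_theta hs', theta_one, Complex.ofReal_one,
      mul_one] at hlim
    exact tendsto_nhds_unique hlim tendsto_const_nhds
  have hsum := (LSeriesSummable_theta hs').LSeriesHasSum.hasSum_pnat
  exact ⟨hmult, hsum.summable, hprod.trans hsum.tsum_eq.symm⟩
end

section
/- Let (a_λ)_λ and (b_λ)_λ be the two specializations of the Hall–Littlewood data at 0 < t < 1: γ(λ) := t^{2n(λ)}/b_λ(t) and, for n ≥ ℓ(λ), κ_n(λ) := t^{∑_{i≥1}(2i−1−n)λ_i} · v_n(t)/v^{(n)}_λ(t). Then for each partition λ the sequence κ_n(λ)·t^{(n−1)|λ|} is monotone increasing in n and converges to γ(λ) as n → ∞. -/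
open Finset Filter

/-- `v_m(t) = ∏_{i=1}^m (1-t^i)/(1-t)`. -/
noncomputable def vR (t : ℝ) (m : ℕ) : ℝ := ∏ i ∈ Icc 1 m, (1 - t ^ i) / (1 - t)

/-- `n(λ) = ∑_i (i-1) λ_i`, with the partition given as a decreasing list `l`. -/
def nstatL (l : List ℕ) : ℕ := ∑ j ∈ range l.length, j * l.getD j 0

/-- `b_λ(t) = ∏_{i≥1} ∏_{j=1}^{m_i(λ)} (1-t^j)`. -/
noncomputable def bL (t : ℝ) (l : List ℕ) : ℝ :=
  ∏ i ∈ l.toFinset, ∏ j ∈ Icc 1 (l.count i), (1 - t ^ j)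

/-- `v^{(n)}_λ(t) = ∏_{i≥0} v_{m_i(λ)}(t)` for `λ` padded with zeros to length `n`. -/
noncomputable def vPad (t : ℝ) (l : List ℕ) (n : ℕ) : ℝ :=
  vR t (n - l.length) * ∏ i ∈ l.toFinset, vR t (l.count i)

/-- `κ_n(λ) = t^{∑_i (2i-1-n) λ_i} · v_n(t)/v^{(n)}_λ(t)`. -/
noncomputable def kappa (t : ℝ) (l : List ℕ) (n : ℕ) : ℝ :=
  t ^ (∑ j ∈ range l.length, (2 * ((j : ℤ) + 1) - 1 - (n : ℤ)) * (l.getD j 0 : ℤ)) *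
    vR t n / vPad t l n

/-- `γ(λ) = t^{2 n(λ)} / b_λ(t)`. -/
noncomputable def gammaL (t : ℝ) (l : List ℕ) : ℝ := t ^ (2 * nstatL l) / bL t l

/-!
Clearing the common factor `v_k(t)` and the powers of `1 - t`, one finds
`κ_{ℓ+k}(λ) · t^{(ℓ+k-1)|λ|} = γ(λ) · ∏_{j=1}^{ℓ} (1 - t^{k+j})` with `ℓ = ℓ(λ)`:
the `t`-exponents combine to `2 n(λ)`, and `v_{ℓ+k}(t) / v_k(t)` is the product of the
`ℓ` factors `(1 - t^{k+j})/(1 - t)`. Each factor `1 - t^{k+j}` increases to `1`.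
-/

lemma List.sum_eq_sum_range_getD (l : List ℕ) :
    l.sum = ∑ j ∈ Finset.range l.length, l.getD j 0 := by
  induction l with
  | nil => simp
  | cons a l ih =>
    rw [List.sum_cons, ih, List.length_cons, Finset.sum_range_succ']
    simp [Nat.add_comm]

lemma one_sub_pow_pos {t : ℝ} (ht0 : 0 ≤ t) (ht1 : t < 1) {i : ℕ} (hi : i ≠ 0) :
    0 < 1 - t ^ i :=
  sub_pos.mpr (pow_lt_one₀ ht0 ht1 hi)

lemma vR_pos {t : ℝ} (ht0 : 0 ≤ t) (ht1 : t < 1) (m : ℕ) : 0 < vR t m :=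
  prod_pos fun _ hi =>
    div_pos (one_sub_pow_pos ht0 ht1 (by grind)) (sub_pos.mpr ht1)

lemma bL_pos {t : ℝ} (ht0 : 0 ≤ t) (ht1 : t < 1) (l : List ℕ) : 0 < bL t l :=
  prod_pos fun _ _ => prod_pos fun _ hj => one_sub_pow_pos ht0 ht1 (by grind)

lemma vR_eq_prod_div_pow (t : ℝ) (m : ℕ) :
    vR t m = (∏ j ∈ Icc 1 m, (1 - t ^ j)) / (1 - t) ^ m := by
  simp [vR, prod_div_distrib]

lemma prod_vR_count (t : ℝ) (l : List ℕ) :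
    ∏ i ∈ l.toFinset, vR t (l.count i) = bL t l / (1 - t) ^ l.length := by
  simp only [vR_eq_prod_div_pow]
  rw [prod_div_distrib, prod_pow_eq_pow_sum, List.sum_toFinset_count_eq_length, bL]

lemma vR_add (t : ℝ) (k m : ℕ) :
    vR t (k + m) = vR t k * ∏ j ∈ Icc 1 m, (1 - t ^ (k + j)) / (1 - t) := by
  induction m with
  | zero => simp
  | succ m ih =>
    rw [← add_assoc, vR, prod_Icc_succ_top (by omega), ← vR, ih,
      prod_Icc_succ_top (by omega), mul_assoc, add_assoc]

lemma kappa_exponent_add (l : List ℕ) (n : ℕ) :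
    (∑ j ∈ range l.length, (2 * ((j : ℤ) + 1) - 1 - (n : ℤ)) * (l.getD j 0 : ℤ))
      + ((n : ℤ) - 1) * (l.sum : ℤ) = ((2 * nstatL l : ℕ) : ℤ) := by
  rw [List.sum_eq_sum_range_getD, nstatL]
  push_cast
  rw [mul_sum, mul_sum, ← sum_add_distrib]
  exact sum_congr rfl fun j _ => by ring

theorem kappa_mul_pow_eq_gammaL_mul_prod {t : ℝ} (ht0 : 0 < t) (ht1 : t < 1) (l : List ℕ)
    (k : ℕ) :
    kappa t l (l.length + k) * t ^ ((((l.length + k : ℕ) : ℤ) - 1) * (l.sum : ℤ)) =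
      gammaL t l * ∏ j ∈ Icc 1 l.length, (1 - t ^ (k + j)) := by
  have hvk := (vR_pos ht0.le ht1 k).ne'
  have hb := (bL_pos ht0.le ht1 l).ne'
  have h1t : 1 - t ≠ 0 := (sub_pos.mpr ht1).ne'
  rw [kappa, vPad, Nat.add_sub_cancel_left, prod_vR_count, Nat.add_comm l.length k, vR_add,
    prod_div_distrib, prod_const, Nat.card_Icc, Nat.add_sub_cancel, gammaL, div_mul_eq_mul_div,
    mul_right_comm, ← zpow_add₀ ht0.ne', Nat.add_comm k l.length, kappa_exponent_add,
    zpow_natCast]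
  field_simp

lemma monotone_prod_one_sub_pow_add {t : ℝ} (ht0 : 0 ≤ t) (ht1 : t ≤ 1) (s : Finset ℕ) :
    Monotone fun k : ℕ => ∏ j ∈ s, (1 - t ^ (k + j)) := fun _ _ hab =>
  prod_le_prod (fun _ _ => sub_nonneg.mpr (pow_le_one₀ ht0 ht1))
    fun _ _ => sub_le_sub_left (pow_le_pow_of_le_one ht0 ht1 (Nat.add_le_add_right hab _)) 1

lemma tendsto_prod_one_sub_pow_add {t : ℝ} (ht0 : 0 ≤ t) (ht1 : t < 1) (s : Finset ℕ) :
    Tendsto (fun k : ℕ => ∏ j ∈ s, (1 - t ^ (k + j))) atTop (nhds 1) := by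
  rw [← prod_const_one (s := s)]
  refine tendsto_finsetProd _ fun j _ => ?_
  have h0 : Tendsto (fun k : ℕ => t ^ (k + j)) atTop (nhds 0) := by
    simpa [pow_add] using (tendsto_pow_atTop_nhds_zero_of_lt_one ht0 ht1).mul_const (t ^ j)
  simpa using tendsto_const_nhds.sub h0

theorem stmt16_general (t : ℝ) (ht0 : 0 < t) (ht1 : t < 1) (l : List ℕ) :
    Monotone (fun k : ℕ =>
      kappa t l (l.length + k) * t ^ ((((l.length + k : ℕ) : ℤ) - 1) * (l.sum : ℤ))) ∧
    Tendsto (fun k : ℕ =>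
        kappa t l (l.length + k) * t ^ ((((l.length + k : ℕ) : ℤ) - 1) * (l.sum : ℤ)))
      atTop (nhds (gammaL t l)) := by
  simp only [kappa_mul_pow_eq_gammaL_mul_prod ht0 ht1]
  have hγ : 0 ≤ gammaL t l := div_nonneg (pow_nonneg ht0.le _) (bL_pos ht0.le ht1 l).le
  refine ⟨(monotone_prod_one_sub_pow_add ht0.le ht1.le _).const_mul hγ, ?_⟩
  simpa using (tendsto_prod_one_sub_pow_add ht0.le ht1 (Icc 1 l.length)).const_mul (gammaL t l)

/-- For `n ≥ ℓ(λ)` the sequence `κ_n(λ) · t^{(n-1)|λ|}` is monotone increasing in `n`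
and converges to `γ(λ)` as `n → ∞`. -/
theorem stmt16 (t : ℝ) (ht0 : 0 < t) (ht1 : t < 1) (l : List ℕ)
    (hsort : l.Pairwise (· ≥ ·)) (hpos : ∀ a ∈ l, 0 < a) :
    Monotone (fun k : ℕ =>
      kappa t l (l.length + k) * t ^ ((((l.length + k : ℕ) : ℤ) - 1) * (l.sum : ℤ))) ∧
    Tendsto (fun k : ℕ =>
        kappa t l (l.length + k) * t ^ ((((l.length + k : ℕ) : ℤ) - 1) * (l.sum : ℤ)))
      atTop (nhds (gammaL t l)) :=
  stmt16_general t ht0 ht1 l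
end
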